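/- arXiv:1205.4003 — 2 statements merged into one kernel-verified Lean document; each statement's English description precedes it below -/
import Mathlib

section
/- Let {μ_{ε,ε'}(i,j)}_{i≠j, ε,ε'∈{1,*}} be nonzero real numbers satisfying relations (A)–(B), and suppose that for all i ≠ j and ALL choices of ε_i, ε_i', ε_j, ε_j' ∈ {1,*}: μ_{ε_i,ε_j'}(j,i) · μ_{ε_i,ε_j}(j,i) · μ_{ε_i',ε_j'}(j,i) · μ_{ε_i',ε_j}(j,i) = 1. Then every coefficient takes values in {−1, 1}: μ_{ε,ε'}(i,j) ∈ {−1, 1} for all i ≠ j and ε, ε' ∈ {1,*}. -/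
open Filter MeasureTheory ProbabilityTheory
open scoped BigOperators ComplexOrder Classical

noncomputable section

/-- `sel a e` is `a^ε`: `a` if `e = false` (i.e. ε = 1) and `star a` if `e = true` (i.e. ε = ∗). -/
def sel {A : Type*} [Star A] (a : A) (e : Bool) : A := if e then star a else a

/-- The product `b_{i(1)}^{ε(1)} ⋯ b_{i(r)}^{ε(r)}`, indexed by a list of (index, exponent) pairs. -/
def listProd {A : Type*} [Monoid A] [Star A] (b : ℕ → A) (l : List (ℕ × Bool)) : A :=
  (l.map fun p => sel (b p.1) p.2).prod

/-- The product `b_{i(1)}^{ε(1)} ⋯ b_{i(r)}^{ε(r)}`, indexed by `Fin r`. -/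
def tupProd {A : Type*} [Monoid A] [Star A] (b : ℕ → A) {r : ℕ}
    (i : Fin r → ℕ) (eps : Fin r → Bool) : A :=
  (List.ofFn fun k => sel (b (i k)) (eps k)).prod

/-- The mixed moment `φ(X^{ε(1)} ⋯ X^{ε(r)})` of a single element `X`. -/
def smom {A : Type*} [Ring A] [StarRing A] [Algebra ℂ A] (φ : A →ₗ[ℂ] ℂ)
    (X : A) {r : ℕ} (eps : Fin r → Bool) : ℂ :=
  φ ((List.ofFn fun k => sel X (eps k)).prod)

/-- The commutation coefficients are nonzero reals. -/
def NonzeroCoeff (c : Bool → Bool → ℕ → ℕ → ℝ) : Prop :=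
  ∀ i j : ℕ, i ≠ j → ∀ e e' : Bool, c e e' i j ≠ 0

/-- Relations (A)–(B) on the commutation coefficients (`false` = 1, `true` = ∗):
`μ_{ε,ε'}(i,j) = 1/μ_{ε',ε}(j,i)`, `μ_{1,1}(i,j) = 1/μ_{∗,∗}(i,j)`,
`μ_{1,∗}(i,j) = 1/μ_{∗,1}(i,j)`. -/
def RelAB (c : Bool → Bool → ℕ → ℕ → ℝ) : Prop :=
  (∀ i j : ℕ, i ≠ j → ∀ e e' : Bool, c e e' i j = (c e' e j i)⁻¹) ∧
  (∀ i j : ℕ, i ≠ j → c false false i j = (c true true i j)⁻¹) ∧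
  (∀ i j : ℕ, i ≠ j → c false true i j = (c true false i j)⁻¹)

/-- Condition (★) for a sequence `b` in a complex ∗-probability space, with
commutation coefficients `c e e' i j = μ_{ε,ε'}(i,j)` (`false` = 1, `true` = ∗).
The factoring over naturally ordered products is stated in block form: a naturally
ordered product is a concatenation of nonempty blocks with constant indices, the
(distinct) block indices being strictly increasing. -/
structure StarCond {A : Type*} [Ring A] [StarRing A] [Algebra ℂ A]
    (φ : A →ₗ[ℂ] ℂ) (b : ℕ → A) (c : Bool → Bool → ℕ → ℕ → ℝ) : Prop where
  zero_mean : ∀ i, φ (b i) = 0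
  zero_mean_star : ∀ i, φ (star (b i)) = 0
  zero_bb : ∀ i, φ (b i * b i) = 0
  zero_ss : ∀ i, φ (star (b i) * star (b i)) = 0
  zero_sb : ∀ i, φ (star (b i) * b i) = 0
  covar : ∀ i j : ℕ, ∀ e e' : Bool,
    φ (sel (b i) e * sel (b i) e') = φ (sel (b j) e * sel (b j) e')
  bounded : ∀ r : ℕ, ∃ α : ℝ, 0 ≤ α ∧ ∀ l : List (ℕ × Bool), l.length = r →
    ‖φ (listProd b l)‖ ≤ α
  factors : ∀ L : List (ℕ × List Bool),
    List.Chain' (· < ·) (L.map Prod.fst) → (∀ p ∈ L, p.2 ≠ []) →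
    φ ((L.map fun p => (p.2.map (sel (b p.1))).prod).prod)
      = (L.map fun p => φ ((p.2.map (sel (b p.1))).prod)).prod
  commRel : ∀ i j : ℕ, i ≠ j → ∀ e e' : Bool,
    sel (b i) e * sel (b j) e' = ((c e' e j i : ℝ) : ℂ) • (sel (b j) e' * sel (b i) e)

/-- The normalized partial sum `S_N = (b 1 + ⋯ + b N)/√N`. -/
def pSum {A : Type*} [Ring A] [Algebra ℂ A] (b : ℕ → A) (N : ℕ) : A :=
  (((Real.sqrt N)⁻¹ : ℝ) : ℂ) • ∑ i ∈ Finset.Icc 1 N, b i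

/-- A pair partition `V = {(w 1, z 1), …, (w n, z n)}` of `{1, …, 2n}` (here of `Fin (2n)`),
with `w i < z i`, `w` strictly increasing, and the `w i, z i` exhausting `Fin (2n)`. -/
structure PairPartition (n : ℕ) where
  w : Fin n → Fin (2 * n)
  z : Fin n → Fin (2 * n)
  wz : ∀ i, w i < z i
  mono : StrictMono w
  bij : Function.Bijective fun p : Fin n × Bool => if p.2 then z p.1 else w p.1

instance (n : ℕ) : Fintype (PairPartition n) :=
  Fintype.ofInjective (fun V : PairPartition n => (V.w, V.z)) (by
    rintro ⟨w₁, z₁, h₁, h₂, h₃⟩ ⟨w₂, z₂, g₁, g₂, g₃⟩ h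
    simp only [Prod.mk.injEq] at h
    obtain ⟨rfl, rfl⟩ := h
    rfl)

/-- The crossings of a pair partition: pairs of blocks `(j, k)` with `w j < w k < z j < z k`. -/
def crossSet {n : ℕ} (V : PairPartition n) : Finset (Fin n × Fin n) :=
  Finset.univ.filter fun p => V.w p.1 < V.w p.2 ∧ V.w p.2 < V.z p.1 ∧ V.z p.1 < V.z p.2

/-- The nestings of a pair partition: pairs of blocks `(j, m)` with `w j < w m < z m < z j`. -/
def nestSet {n : ℕ} (V : PairPartition n) : Finset (Fin n × Fin n) :=
  Finset.univ.filter fun p => V.w p.1 < V.w p.2 ∧ V.w p.2 < V.z p.2 ∧ V.z p.2 < V.z p.1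

/-- `cross(V)`, the number of crossings. -/
def crossNum {n : ℕ} (V : PairPartition n) : ℕ := (crossSet V).card

/-- `nest(V)`, the number of nestings. -/
def nestNum {n : ℕ} (V : PairPartition n) : ℕ := (nestSet V).card

/-- Two positions lie in the same block of the pair partition `V`. -/
def sameBlock {n : ℕ} (V : PairPartition n) (k₁ k₂ : Fin (2 * n)) : Prop :=
  k₁ = k₂ ∨ ∃ m, (k₁ = V.w m ∧ k₂ = V.z m) ∨ (k₁ = V.z m ∧ k₂ = V.w m)

/-- `(i(1), …, i(2n)) ∼ V`: entries agree exactly on the blocks of `V`. -/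
def tupleEquiv {n : ℕ} {α : Type*} (V : PairPartition n) (i : Fin (2 * n) → α) : Prop :=
  ∀ k₁ k₂, i k₁ = i k₂ ↔ sameBlock V k₁ k₂

/-- The tuples in `[N]^{2n} = {1, …, N}^{2n}` that are equivalent to `V`. -/
def tuples (n N : ℕ) (V : PairPartition n) : Finset (Fin (2 * n) → ℕ) :=
  (Fintype.piFinset fun _ : Fin (2 * n) => Finset.Icc 1 N).filter fun i => tupleEquiv V i

/-- `β^{ε(1),…,ε(2n)}_{i(1),…,i(2n)}`: the product over crossings of `V` of
`μ_{ε(z_j),ε(w_k)}(i(z_j),i(w_k))` times the product over nestings of `V` of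
`μ_{ε(z_j),ε(z_m)}(i(z_j),i(z_m)) · μ_{ε(z_j),ε(w_m)}(i(z_j),i(w_m))`. -/
def betaProd (n : ℕ) (V : PairPartition n) (eps : Fin (2 * n) → Bool)
    (c : Bool → Bool → ℕ → ℕ → ℝ) (i : Fin (2 * n) → ℕ) : ℝ :=
  (∏ p ∈ crossSet V, c (eps (V.z p.1)) (eps (V.w p.2)) (i (V.z p.1)) (i (V.w p.2))) *
  ∏ p ∈ nestSet V,
    c (eps (V.z p.1)) (eps (V.z p.2)) (i (V.z p.1)) (i (V.z p.2)) *
      c (eps (V.z p.1)) (eps (V.w p.2)) (i (V.z p.1)) (i (V.w p.2))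

/-- `X_N = N^{-n} Σ_{(i(1),…,i(2n)) ∼ V} β^{ε(1),…,ε(2n)}_{i(1),…,i(2n)}`, whose limit
(when it exists) is `λ_{V,ε(1),…,ε(2n)}`. -/
def lambdaSum (n : ℕ) (V : PairPartition n) (eps : Fin (2 * n) → Bool)
    (c : Bool → Bool → ℕ → ℕ → ℝ) (N : ℕ) : ℝ :=
  ((N : ℝ)⁻¹) ^ n * ∑ i ∈ tuples n N V, betaProd n V eps c i

/-- One-pair standard prescription: for `x = μ(i,j)` (with `i < j`),
`μ_{∗,∗} = x`, `μ_{∗,1} = t·x`, `μ_{1,1} = x⁻¹`, `μ_{1,∗} = (t·x)⁻¹`. -/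
def prescOne (t x : ℝ) (e e' : Bool) : ℝ :=
  if e then (if e' then x else t * x) else (if e' then (t * x)⁻¹ else x⁻¹)

/-- The standard prescription of commutation coefficients from `{μ(i,j)}_{i<j}`,
extended to `i > j` by `μ_{ε',ε}(j,i) = 1/μ_{ε,ε'}(i,j)`. -/
def presc (t : ℝ) (m : ℕ → ℕ → ℝ) (e e' : Bool) (i j : ℕ) : ℝ :=
  if i < j then prescOne t (m i j) e e' else (prescOne t (m j i) e' e)⁻¹

/-- The index set `{(i,j) : 1 ≤ i < j}` of the random commutation coefficients. -/
def PairIdx : Type := {p : ℕ × ℕ // 1 ≤ p.1 ∧ p.1 < p.2}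

/-- `σ_x = [[1,0],[0,√t·x]]`. -/
def sigmaM (t x : ℝ) : Matrix (Fin 2) (Fin 2) ℝ := !![1, 0; 0, Real.sqrt t * x]

/-- `γ = [[0,1],[0,0]]`. -/
def gammaM : Matrix (Fin 2) (Fin 2) ℝ := !![0, 1; 0, 0]

/-- The two-parameter Jordan–Wigner matrix
`b_{n,i} = σ_{μ(1,i)} ⊗ ⋯ ⊗ σ_{μ(i-1,i)} ⊗ γ ⊗ σ₁^{⊗(n-i)} ∈ M₂(ℝ)^{⊗n}`,
realized on the index set `Fin n → Fin 2` (tensor/Kronecker products of matrices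
have entries the products of the entries of the factors). -/
def jw (t : ℝ) (m : ℕ → ℕ → ℝ) (n i : ℕ) : Matrix (Fin n → Fin 2) (Fin n → Fin 2) ℝ :=
  Matrix.of fun x y => ∏ k : Fin n,
    (if (k : ℕ) + 1 < i then sigmaM t (m ((k : ℕ) + 1) i)
     else if (k : ℕ) + 1 = i then gammaM
     else sigmaM t 1) (x k) (y k)

/-- `φ_n(a) = ⟨a e₀, e₀⟩ = a₀₀`. -/
def phiM (n : ℕ) (a : Matrix (Fin n → Fin 2) (Fin n → Fin 2) ℝ) : ℝ :=
  a (fun _ => 0) (fun _ => 0)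

/-- The normalized partial sum `S_N = (b_{N,1} + ⋯ + b_{N,N})/√N` of Jordan–Wigner matrices. -/
def jwS (t : ℝ) (m : ℕ → ℕ → ℝ) (N : ℕ) : Matrix (Fin N → Fin 2) (Fin N → Fin 2) ℝ :=
  (Real.sqrt N)⁻¹ • ∑ i ∈ Finset.Icc 1 N, jw t m N i

theorem coeff_pm_one_of_all_products_one_general
    (c : Bool → Bool → ℕ → ℕ → ℝ) (hAB : RelAB c)
    (h : ∀ i j : ℕ, i ≠ j → ∀ ei ei' ej ej' : Bool,
      c ei ej' j i * c ei ej j i * c ei' ej' j i * c ei' ej j i = 1) :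
    ∀ i j : ℕ, i ≠ j → ∀ e e' : Bool, c e e' i j = 1 ∨ c e e' i j = -1 := by
  intro i j hij e e'
  -- Taking `ε_i = ε_i' = ε'` and `ε_j = ε_j' = ε` makes the four factors equal.
  have hpow : c e' e j i ^ 4 = 1 := by
    simpa only [pow_succ, pow_zero, one_mul] using h i j hij e' e' e e
  have hinv_pow : (c e' e j i)⁻¹ ^ 4 = 1 := by rw [inv_pow, hpow, inv_one]
  rw [hAB.1 i j hij e e']
  exact ((pow_eq_one_iff_of_ne_zero four_ne_zero).mp hinv_pow).imp_right And.left

/-- under relations (A)–(B), if for all `i ≠ j` and ALL choices of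
exponents the product `μ_{ε_i,ε_j'}(j,i) μ_{ε_i,ε_j}(j,i) μ_{ε_i',ε_j'}(j,i) μ_{ε_i',ε_j}(j,i)`
equals 1, then every coefficient takes values in `{-1, 1}`. -/
theorem coeff_pm_one_of_all_products_one
    (c : Bool → Bool → ℕ → ℕ → ℝ) (hnz : NonzeroCoeff c) (hAB : RelAB c)
    (h : ∀ i j : ℕ, i ≠ j → ∀ ei ei' ej ej' : Bool,
      c ei ej' j i * c ei ej j i * c ei' ej' j i * c ei' ej j i = 1) :
    ∀ i j : ℕ, i ≠ j → ∀ e e' : Bool, c e e' i j = 1 ∨ c e e' i j = -1 :=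
  coeff_pm_one_of_all_products_one_general c hAB h
end
end

section
/- Let (𝒜, φ) be a non-commutative probability space, let i < j, and let b_i, b_j ∈ 𝒜 satisfy the commutation relations b_i^ε b_j^{ε'} = μ_{ε',ε}(j,i) b_j^{ε'} b_i^ε (ε, ε' ∈ {1,*}) with nonzero real coefficients satisfying relations (A)–(B), and suppose φ factors over naturally ordered products in {b_i, b_j}. Then φ(b_i b_j b_j^* b_i^*) = μ_{*,1}(i,j) · μ_{*,*}(i,j) · φ(b_i b_i^*) · φ(b_j b_j^*). Consequently, if φ is positive (φ(a a^*) ≥ 0 for all a ∈ 𝒜) and φ(b_i b_i^*) > 0 and φ(b_j b_j^*) > 0, then μ_{*,1}(i,j) and μ_{*,*}(i,j) have the same sign: μ_{*,1}(i,j)/|μ_{*,1}(i,j)| = μ_{*,*}(i,j)/|μ_{*,*}(i,j)|. -/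
open Filter MeasureTheory ProbabilityTheory
open scoped BigOperators ComplexOrder Classical

noncomputable section

/- Pushing `star x` leftwards past `y` and `star y` costs the factor `μ_{∗,1}(i,j) μ_{∗,∗}(i,j)`
and leaves the naturally ordered product `(x x^∗)(y y^∗)`, on which `φ` factors. Since
`x y (x y)^∗ = x y y^∗ x^∗`, positivity of `φ` makes this product of coefficients nonnegative,
and as both are nonzero it is positive. -/

theorem mul_mul_mul_eq_smul_of_skewCommute {R A : Type*} [CommSemiring R] [Semiring A]
    [Algebra R A] {x y z w : A} {a b : R}
    (hy : y * w = a • (w * y)) (hz : z * w = b • (w * z)) :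
    x * y * z * w = (a * b) • (x * w * (y * z)) := by
  calc x * y * z * w = x * (y * (z * w)) := by simp only [mul_assoc]
    _ = x * (b • ((y * w) * z)) := by rw [hz, mul_smul_comm, mul_assoc]
    _ = (a * b) • (x * w * (y * z)) := by
      rw [hy, smul_mul_assoc, mul_smul_comm, mul_smul_comm, smul_smul]
      simp only [mul_assoc, mul_comm b a]

theorem div_abs_eq_div_abs_of_mul_pos {K : Type*} [Field K] [LinearOrder K]
    [IsStrictOrderedRing K] {a b : K} (h : 0 < a * b) : a / |a| = b / |b| := by
  rcases mul_pos_iff.1 h with ⟨ha, hb⟩ | ⟨ha, hb⟩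
  · rw [abs_of_pos ha, abs_of_pos hb, div_self ha.ne', div_self hb.ne']
  · rw [abs_of_neg ha, abs_of_neg hb, div_neg, div_neg, div_self ha.ne, div_self hb.ne]

theorem Complex.nonneg_of_nonneg_ofReal_mul {r : ℝ} {z : ℂ} (hz : 0 < z)
    (h : 0 ≤ (r : ℂ) * z) : 0 ≤ r := by
  have hre : 0 ≤ r * z.re := by simpa using (Complex.le_def.1 h).1
  exact nonneg_of_mul_nonneg_left hre (Complex.lt_def.1 hz).1

theorem positivity_constrains_signs_general {A : Type*} [Ring A] [StarRing A] [Algebra ℂ A]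
    (φ : A →ₗ[ℂ] ℂ) (hpos : ∀ a : A, 0 ≤ φ (a * star a))
    (i j : ℕ) (hij : i < j) (x y : A)
    (c : Bool → Bool → ℕ → ℕ → ℝ) (hnz : NonzeroCoeff c)
    (hcomm₂ : ∀ e e' : Bool,
      sel y e * sel x e' = ((c e' e i j : ℝ) : ℂ) • (sel x e' * sel y e))
    (hfac : ∀ l₁ l₂ : List Bool,
      φ ((l₁.map (sel x)).prod * (l₂.map (sel y)).prod)
        = φ ((l₁.map (sel x)).prod) * φ ((l₂.map (sel y)).prod)) :
    φ (x * y * star y * star x)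
        = ((c true false i j * c true true i j : ℝ) : ℂ) *
          (φ (x * star x) * φ (y * star y)) ∧
    (0 < φ (x * star x) → 0 < φ (y * star y) →
      c true false i j / |c true false i j| = c true true i j / |c true true i j|) := by
  have hyx : y * star x = ((c true false i j : ℝ) : ℂ) • (star x * y) := by
    simpa [sel] using hcomm₂ false true
  have hyx' : star y * star x = ((c true true i j : ℝ) : ℂ) • (star x * star y) := by
    simpa [sel] using hcomm₂ true true
  have hsplit : φ (x * star x * (y * star y)) = φ (x * star x) * φ (y * star y) := by
    simpa [sel] using hfac [false, true] [false, true]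
  have hmoment : φ (x * y * star y * star x)
      = ((c true false i j * c true true i j : ℝ) : ℂ) * (φ (x * star x) * φ (y * star y)) := by
    rw [mul_mul_mul_eq_smul_of_skewCommute hyx hyx', map_smul, smul_eq_mul, hsplit,
      Complex.ofReal_mul]
  refine ⟨hmoment, fun hx hy => div_abs_eq_div_abs_of_mul_pos ?_⟩
  have hnonneg : 0 ≤ c true false i j * c true true i j := by
    refine Complex.nonneg_of_nonneg_ofReal_mul (mul_pos hx hy) ?_
    simpa only [star_mul, ← mul_assoc, hmoment] using hpos (x * y)
  exact hnonneg.lt_of_ne' (mul_ne_zero (hnz i j hij.ne true false) (hnz i j hij.ne true true))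

/-- with `x = b_i`, `y = b_j` (`i < j`) commuting via coefficients
satisfying (A)–(B) and `φ` factoring over naturally ordered products in `{b_i, b_j}`,
`φ(b_i b_j b_j^∗ b_i^∗) = μ_{∗,1}(i,j) μ_{∗,∗}(i,j) φ(b_i b_i^∗) φ(b_j b_j^∗)`;
consequently if `φ(b_i b_i^∗) > 0` and `φ(b_j b_j^∗) > 0` then `μ_{∗,1}(i,j)` and
`μ_{∗,∗}(i,j)` have the same sign. -/
theorem positivity_constrains_signs {A : Type*} [Ring A] [StarRing A] [Algebra ℂ A]
    [StarModule ℂ A]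
    (φ : A →ₗ[ℂ] ℂ) (hφ1 : φ 1 = 1) (hpos : ∀ a : A, 0 ≤ φ (a * star a))
    (i j : ℕ) (hij : i < j) (x y : A)
    (c : Bool → Bool → ℕ → ℕ → ℝ) (hnz : NonzeroCoeff c) (hAB : RelAB c)
    (hcomm₁ : ∀ e e' : Bool,
      sel x e * sel y e' = ((c e' e j i : ℝ) : ℂ) • (sel y e' * sel x e))
    (hcomm₂ : ∀ e e' : Bool,
      sel y e * sel x e' = ((c e' e i j : ℝ) : ℂ) • (sel x e' * sel y e))
    (hfac : ∀ l₁ l₂ : List Bool,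
      φ ((l₁.map (sel x)).prod * (l₂.map (sel y)).prod)
        = φ ((l₁.map (sel x)).prod) * φ ((l₂.map (sel y)).prod)) :
    φ (x * y * star y * star x)
        = ((c true false i j * c true true i j : ℝ) : ℂ) *
          (φ (x * star x) * φ (y * star y)) ∧
    (0 < φ (x * star x) → 0 < φ (y * star y) →
      c true false i j / |c true false i j| = c true true i j / |c true true i j|) :=
  positivity_constrains_signs_general φ hpos i j hij x y c hnz hcomm₂ hfac
end
end
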